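/- Let G be a group and let s₁, s₂, s₃ ∈ G satisfy the braid relations of the 4-strand braid group: s₁s₂s₁ = s₂s₁s₂, s₂s₃s₂ = s₃s₂s₃, and s₁s₃ = s₃s₁. Set w = s₂s₃s₁s₂. Then s₁⁴ · w^q = w · s₃⁴ · w^{q−1} for every integer q, and, when q is odd, s₁⁴ · w^q = w · s₃² · w^{q−1} · s₃². -/

import Mathlib

/-!
Conjugation by `w = s₂ s₃ s₁ s₂` interchanges `s₁` and `s₃`, so `s₁⁴ w = w s₃⁴` and `w²`
commutes with `s₃`. For odd `q` the exponent `q - 1` is even, so one factor `s₃²` of `s₃⁴` can be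
moved past `w ^ (q - 1)`.
-/

section SemiconjBy

variable {G : Type*} [Group G] {w a b : G}

theorem SemiconjBy.pow_mul_zpow_eq (h : SemiconjBy w a b) (n : ℕ) (q : ℤ) :
    b ^ n * w ^ q = w * a ^ n * w ^ (q - 1) := by
  rw [(h.pow_right n).eq, mul_assoc, ← zpow_one_add, add_sub_cancel]

theorem Commute.zpow_right_of_even (h : Commute a (w ^ 2)) {m : ℤ} (hm : Even m) :
    Commute a (w ^ m) := by
  obtain ⟨k, rfl⟩ := hm
  rw [← two_mul, zpow_mul, zpow_ofNat]
  exact h.zpow_right k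

end SemiconjBy

section BraidRelations

variable {G : Type*} [Group G] {s₁ s₂ s₃ : G}

theorem semiconjBy_braid_s₃_s₁ (h12 : s₁ * s₂ * s₁ = s₂ * s₁ * s₂)
    (h23 : s₂ * s₃ * s₂ = s₃ * s₂ * s₃) (h13 : s₁ * s₃ = s₃ * s₁) :
    SemiconjBy (s₂ * s₃ * s₁ * s₂) s₃ s₁ := by
  unfold SemiconjBy
  symm
  calc s₁ * (s₂ * s₃ * s₁ * s₂) = s₁ * s₂ * (s₃ * s₁) * s₂ := by group
  _ = s₁ * s₂ * s₁ * (s₃ * s₂) := by rw [← h13]; group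
  _ = s₂ * s₁ * (s₂ * s₃ * s₂) := by rw [h12]; group
  _ = s₂ * (s₁ * s₃) * (s₂ * s₃) := by rw [h23]; group
  _ = s₂ * s₃ * s₁ * s₂ * s₃ := by rw [h13]; group

theorem semiconjBy_braid_s₁_s₃ (h12 : s₁ * s₂ * s₁ = s₂ * s₁ * s₂)
    (h23 : s₂ * s₃ * s₂ = s₃ * s₂ * s₃) :
    SemiconjBy (s₂ * s₃ * s₁ * s₂) s₁ s₃ := by
  unfold SemiconjBy
  symm
  calc s₃ * (s₂ * s₃ * s₁ * s₂) = s₃ * s₂ * s₃ * s₁ * s₂ := by group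
  _ = s₂ * s₃ * (s₂ * s₁ * s₂) := by rw [← h23]; group
  _ = s₂ * s₃ * s₁ * s₂ * s₁ := by rw [← h12]; group

end BraidRelations

theorem braid_rewriting_steps {G : Type*} [Group G] (s₁ s₂ s₃ : G)
    (h12 : s₁ * s₂ * s₁ = s₂ * s₁ * s₂)
    (h23 : s₂ * s₃ * s₂ = s₃ * s₂ * s₃)
    (h13 : s₁ * s₃ = s₃ * s₁) :
    (∀ q : ℤ, s₁ ^ 4 * (s₂ * s₃ * s₁ * s₂) ^ q =
        (s₂ * s₃ * s₁ * s₂) * s₃ ^ 4 * (s₂ * s₃ * s₁ * s₂) ^ (q - 1)) ∧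
      (∀ q : ℤ, Odd q → s₁ ^ 4 * (s₂ * s₃ * s₁ * s₂) ^ q =
        (s₂ * s₃ * s₁ * s₂) * s₃ ^ 2 * (s₂ * s₃ * s₁ * s₂) ^ (q - 1) * s₃ ^ 2) := by
  set w := s₂ * s₃ * s₁ * s₂
  have hw₃ : SemiconjBy w s₃ s₁ := semiconjBy_braid_s₃_s₁ h12 h23 h13
  have hw₁ : SemiconjBy w s₁ s₃ := semiconjBy_braid_s₁_s₃ h12 h23
  have hsq : Commute s₃ (w ^ 2) := by
    rw [pow_two]
    exact (hw₁.mul_left hw₃).symm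
  refine ⟨hw₃.pow_mul_zpow_eq 4, fun q hq => ?_⟩
  have hcomm : Commute (s₃ ^ 2) (w ^ (q - 1)) :=
    (hsq.zpow_right_of_even (hq.sub_odd odd_one)).pow_left 2
  calc s₁ ^ 4 * w ^ q = w * s₃ ^ 2 * (s₃ ^ 2 * w ^ (q - 1)) := by
        rw [hw₃.pow_mul_zpow_eq 4]; group
  _ = w * s₃ ^ 2 * w ^ (q - 1) * s₃ ^ 2 := by rw [hcomm.eq, ← mul_assoc]
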